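/- arXiv:1504.06713 — 3 statements merged into one kernel-verified Lean document; each statement's English description precedes it below -/
import Mathlib

section
/- Let G = (V, E) be a finite connected loopless multigraph and let D be an effective divisor on G. Let F be the set of D-blocking edges and let U be the vertex set of a connected component of the graph (V, E ∖ F). Then for every effective divisor D' equivalent to D, one has Σ_{u∈U} D'(u) = Σ_{u∈U} D(u). -/
open Finset
open scoped Classical

variable {V : Type*}

/-- Laplacian of the multigraph with edge multiplicity function `m`, applied to `x`. -/
def lap [Fintype V] (m : V → V → ℕ) (x : V → ℤ) : V → ℤ :=
  fun u => (∑ w, (m u w : ℤ)) * x u - ∑ w, (m u w : ℤ) * x w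

/-- A divisor is effective if it is nonnegative. -/
def Effective (D : V → ℤ) : Prop := ∀ v, 0 ≤ D v

/-- Linear equivalence of divisors. -/
def DivEquiv [Fintype V] (m : V → V → ℕ) (D D' : V → ℤ) : Prop :=
  ∃ x : V → ℤ, D - D' = lap m x

/-- Degree of a divisor. -/
def divDeg [Fintype V] (D : V → ℤ) : ℤ := ∑ v, D v

/-- Indicator vector of a subset. -/
def indVec [DecidableEq V] (U : Finset V) : V → ℤ := fun v => if v ∈ U then 1 else 0

/-- The underlying graph of the multigraph is connected. -/
def Conn [Fintype V] (m : V → V → ℕ) : Prop :=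
  (SimpleGraph.fromRel fun u v => m u v ≠ 0).Connected

/-- The equivalence relation `≡_D` on vertices. -/
def DEquiv [Fintype V] (m : V → V → ℕ) (D : V → ℤ) (u v : V) : Prop :=
  ∀ x : V → ℤ, Effective (D - lap m x) → x u = x v

/-- Rank of a divisor. -/
noncomputable def divRank [Fintype V] (m : V → V → ℕ) (D : V → ℤ) : ℤ :=
  if ∃ D' : V → ℤ, DivEquiv m D D' ∧ Effective D' then
    sSup {k : ℤ | 0 ≤ k ∧ ∀ E : V → ℤ, Effective E → divDeg E ≤ k →
      ∃ D' : V → ℤ, DivEquiv m (D - E) D' ∧ Effective D'}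
  else -1

/-- Gonality of the multigraph. -/
noncomputable def dgon (V : Type*) [Fintype V] (m : V → V → ℕ) : ℤ :=
  sInf {d : ℤ | ∃ D : V → ℤ, 1 ≤ divRank m D ∧ divDeg D = d}

section

variable [Fintype V] {m : V → V → ℕ}

lemma lap_apply_eq_sum (x : V → ℤ) (u : V) :
    lap m x u = ∑ w, (m u w : ℤ) * (x u - x w) := by
  simp only [lap, mul_sub, sum_sub_distrib, sum_mul]

/-- The terms of the edges inside `U` cancel in pairs because `m` is symmetric. -/
lemma sum_lap_eq_sum_compl (hsymm : ∀ u v, m u v = m v u) (x : V → ℤ) (U : Finset V) :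
    ∑ u ∈ U, lap m x u = ∑ u ∈ U, ∑ w ∈ Uᶜ, (m u w : ℤ) * (x u - x w) := by
  set f : V → V → ℤ := fun u w => (m u w : ℤ) * (x u - x w)
  have hinner : ∑ u ∈ U, ∑ w ∈ U, f u w = 0 := by
    have hanti : ∑ u ∈ U, ∑ w ∈ U, f u w = ∑ w ∈ U, ∑ u ∈ U, -f w u := by
      rw [sum_comm]
      refine sum_congr rfl fun u _ => sum_congr rfl fun w _ => ?_
      simp only [f, hsymm w u]
      ring
    simp only [sum_neg_distrib] at hanti
    linarith
  calc ∑ u ∈ U, lap m x u = ∑ u ∈ U, (∑ w ∈ U, f u w + ∑ w ∈ Uᶜ, f u w) :=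
        sum_congr rfl fun u _ => by rw [lap_apply_eq_sum, sum_add_sum_compl]
    _ = ∑ u ∈ U, ∑ w ∈ Uᶜ, f u w := by rw [sum_add_distrib, hinner, zero_add]

lemma sum_lap_eq_zero_of_forall_edge (hsymm : ∀ u v, m u v = m v u) {x : V → ℤ}
    {U : Finset V} (hx : ∀ u ∈ U, ∀ w ∉ U, m u w ≠ 0 → x u = x w) :
    ∑ u ∈ U, lap m x u = 0 := by
  rw [sum_lap_eq_sum_compl hsymm]
  refine sum_eq_zero fun u hu => sum_eq_zero fun w hw => ?_
  by_cases hm : m u w = 0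
  · simp [hm]
  · simp [hx u hu w (mem_compl.1 hw) hm]

/-- If `D' = D - Q x` is effective, `x` is constant across `D`-blocking edges, so no chips cross
the boundary of `U`. -/
lemma sum_eq_sum_of_divEquiv (hsymm : ∀ u v, m u v = m v u) {D D' : V → ℤ}
    (hD' : Effective D') (hequiv : DivEquiv m D D') {U : Finset V}
    (hU : ∀ u ∈ U, ∀ w ∉ U, m u w ≠ 0 → DEquiv m D u w) :
    ∑ u ∈ U, D' u = ∑ u ∈ U, D u := by
  obtain ⟨x, hx⟩ := hequiv
  have hD'x : D' = D - lap m x := by rw [← hx]; abel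
  have hflow : ∑ u ∈ U, lap m x u = 0 :=
    sum_lap_eq_zero_of_forall_edge hsymm fun u hu w hw hm => hU u hu w hw hm x (hD'x ▸ hD')
  simp [hD'x, sum_sub_distrib, hflow]

end

lemma SimpleGraph.not_rel_of_reachable_of_not_reachable {r : V → V → Prop}
    {u₀ u w : V} (hu : (SimpleGraph.fromRel r).Reachable u₀ u)
    (hw : ¬ (SimpleGraph.fromRel r).Reachable u₀ w) : ¬ r u w := fun h =>
  have hne : u ≠ w := fun e => hw (e ▸ hu)
  hw (hu.trans ((SimpleGraph.fromRel_adj r u w).2 ⟨hne, Or.inl h⟩).reachable)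

theorem chips_constant_on_component_general [Fintype V] (m : V → V → ℕ)
    (hsymm : ∀ u v, m u v = m v u)
    (D : V → ℤ) (u₀ : V)
    (D' : V → ℤ) (hD' : Effective D') (hequiv : DivEquiv m D D') :
    ∑ᶠ w ∈ {w | (SimpleGraph.fromRel fun a b => m a b ≠ 0 ∧ ¬ DEquiv m D a b).Reachable u₀ w},
        D' w =
      ∑ᶠ w ∈ {w | (SimpleGraph.fromRel fun a b => m a b ≠ 0 ∧ ¬ DEquiv m D a b).Reachable u₀ w},
        D w := by
  rw [finsum_mem_eq_finite_toFinset_sum _ (Set.toFinite _),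
    finsum_mem_eq_finite_toFinset_sum _ (Set.toFinite _)]
  refine sum_eq_sum_of_divEquiv hsymm hD' hequiv fun u hu w hw hm => ?_
  simp only [Set.Finite.mem_toFinset, Set.mem_ofPred_eq] at hu hw
  by_contra hblock
  exact SimpleGraph.not_rel_of_reachable_of_not_reachable hu hw ⟨hm, hblock⟩

/-- Lemma 3: if `F` is the set of `D`-blocking edges and `U` is (the vertex set of) a connected
component of `(V, E ∖ F)` — i.e. the reachability class of some vertex `u₀` in the graph whose
edges are the non-blocking edges — then the total number of chips on `U` is the same for every
effective divisor `D'` equivalent to `D`. -/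
theorem chips_constant_on_component [Fintype V] [DecidableEq V] (m : V → V → ℕ)
    (hsymm : ∀ u v, m u v = m v u) (hloop : ∀ v, m v v = 0) (hconn : Conn m)
    (D : V → ℤ) (hD : Effective D) (u₀ : V)
    (D' : V → ℤ) (hD' : Effective D') (hequiv : DivEquiv m D D') :
    ∑ᶠ w ∈ {w | (SimpleGraph.fromRel fun a b => m a b ≠ 0 ∧ ¬ DEquiv m D a b).Reachable u₀ w},
        D' w =
      ∑ᶠ w ∈ {w | (SimpleGraph.fromRel fun a b => m a b ≠ 0 ∧ ¬ DEquiv m D a b).Reachable u₀ w},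
        D w :=
  chips_constant_on_component_general m hsymm D u₀ D' hD' hequiv
end

section
/- Let G be a finite connected loopless multigraph and let D and D' be equivalent effective divisors on G. Then the equivalence relations ≡_D and ≡_{D'} on the vertex set coincide: for all vertices u, v, one has u ≡_D v if and only if u ≡_{D'} v. -/
open Finset
open scoped Classical

variable {V : Type*}

lemma lap_add [Fintype V] (m : V → V → ℕ) (x y : V → ℤ) :
    lap m (x + y) = lap m x + lap m y := by
  funext u
  simp only [lap, Pi.add_apply, mul_add, Finset.sum_add_distrib]
  ring

lemma dequiv_mono [Fintype V] (m : V → V → ℕ) (D D' : V → ℤ)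
    (hD' : Effective D') (y : V → ℤ) (hy : D - D' = lap m y)
    (u v : V) (h : DEquiv m D u v) : DEquiv m D' u v := by
  have hyuv : y u = y v := by
    apply h y
    have : D - lap m y = D' := by rw [← hy]; ring
    rw [this]; exact hD'
  intro x hx
  have hxy := h (x + y) ?_
  · simp only [Pi.add_apply] at hxy; linarith
  · have : D - lap m (x + y) = D' - lap m x := by
      rw [lap_add]; rw [sub_eq_iff_eq_add] at hy; rw [hy]; ring
    rw [this]; exact hx

/-- If `D` and `D'` are equivalent effective divisors then the relations `≡_D` and `≡_{D'}`
coincide. -/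
theorem dequiv_eq_of_equiv [Fintype V] [DecidableEq V] (m : V → V → ℕ)
    (hsymm : ∀ u v, m u v = m v u) (hloop : ∀ v, m v v = 0) (hconn : Conn m)
    (D D' : V → ℤ) (hD : Effective D) (hD' : Effective D') (hequiv : DivEquiv m D D') :
    ∀ u v : V, DEquiv m D u v ↔ DEquiv m D' u v := by
  obtain ⟨y, hy⟩ := hequiv
  intro u v
  constructor
  · exact dequiv_mono m D D' hD' y hy u v
  · refine dequiv_mono m D' D hD (-y) ?_ u v
    have : lap m (y + (-y)) = lap m y + lap m (-y) := lap_add m y (-y)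
    simp only [add_neg_cancel] at this
    have h0 : lap m (0 : V → ℤ) = 0 := by
      funext w; simp [lap]
    rw [h0] at this
    have hneg : lap m (-y) = - lap m y := by
      rw [eq_neg_iff_add_eq_zero, add_comm, ← this]
    rw [hneg, ← hy]; ring
end

section
/- Let G = (V, E) be a finite connected simple graph and let Ĝ be the multigraph constructed from G as follows, with M := 3|V| + 2|E| + 2. The vertices of Ĝ are: a node T; for every v ∈ V three nodes v, v', T_v; and for every edge e ∈ E with endpoints u and v, two nodes e_u and e_v. The edges of Ĝ are: for every edge e ∈ E with endpoints u and v, one edge between e_u and e_v, M parallel edges between u and e_u, and M parallel edges between e_v and v; and for every v ∈ V, three parallel edges between v' and T_v, M parallel edges between v and v', and M parallel edges between T_v and T. Let D be an effective divisor on Ĝ with deg(D) = dgon(Ĝ). Then every M-fold parallel class of edges of Ĝ is D-blocking; in particular, T ≡_D T_v for every v ∈ V, and for every v ∈ V, v ≡_D v' and v ≡_D e_v for every edge e incident to v. -/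
open Finset
open scoped Classical

variable {V : Type*}

/-- `S` is an independent set in the simple graph `G`. -/
def IsIndepSet' (G : SimpleGraph V) (S : Finset V) : Prop :=
  ∀ u ∈ S, ∀ v ∈ S, ¬ G.Adj u v

/-- The independence number `α(G)`: the maximum size of an independent set in `G`. -/
noncomputable def alphaNum [Fintype V] (G : SimpleGraph V) : ℕ :=
  sSup {n : ℕ | ∃ S : Finset V, IsIndepSet' G S ∧ S.card = n}

/-- The vertex set of the graph `Ĝ` constructed from `G`:
`Sum.inl ()` is the node `T`;
`Sum.inr (Sum.inl v)` is the node `v`;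
`Sum.inr (Sum.inr (Sum.inl v))` is the node `v'`;
`Sum.inr (Sum.inr (Sum.inr (Sum.inl v)))` is the node `T_v`;
`Sum.inr (Sum.inr (Sum.inr (Sum.inr ⟨(u, w), h⟩)))` is the node `e_u` for the edge
`e = uw` of `G`. -/
abbrev HatV (G : SimpleGraph V) : Type _ :=
  Unit ⊕ V ⊕ V ⊕ V ⊕ {p : V × V // G.Adj p.1 p.2}

/-- The edge multiplicity function of the graph `Ĝ` constructed from `G`, with `M` the
multiplicity of the parallel classes: for every edge `e ∈ E(u,w)` there is one edge between
`e_u` and `e_w`, and `M` parallel edges between `u` and `e_u` (and between `e_w` and `w`);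
for every `v ∈ V` there are three parallel edges between `v'` and `T_v`, `M` parallel edges
between `v` and `v'`, and `M` parallel edges between `T_v` and `T`. -/
def hatM [DecidableEq V] (G : SimpleGraph V) (M : ℕ) : HatV G → HatV G → ℕ
  | Sum.inl _, Sum.inr (Sum.inr (Sum.inr (Sum.inl _))) => M
  | Sum.inr (Sum.inr (Sum.inr (Sum.inl _))), Sum.inl _ => M
  | Sum.inr (Sum.inr (Sum.inl v)), Sum.inr (Sum.inr (Sum.inr (Sum.inl w))) =>
      if v = w then 3 else 0
  | Sum.inr (Sum.inr (Sum.inr (Sum.inl w))), Sum.inr (Sum.inr (Sum.inl v)) =>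
      if v = w then 3 else 0
  | Sum.inr (Sum.inl v), Sum.inr (Sum.inr (Sum.inl w)) => if v = w then M else 0
  | Sum.inr (Sum.inr (Sum.inl w)), Sum.inr (Sum.inl v) => if v = w then M else 0
  | Sum.inr (Sum.inl u), Sum.inr (Sum.inr (Sum.inr (Sum.inr p))) =>
      if u = p.1.1 then M else 0
  | Sum.inr (Sum.inr (Sum.inr (Sum.inr p))), Sum.inr (Sum.inl u) =>
      if u = p.1.1 then M else 0
  | Sum.inr (Sum.inr (Sum.inr (Sum.inr p))), Sum.inr (Sum.inr (Sum.inr (Sum.inr q))) =>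
      if p.1.1 = q.1.2 ∧ p.1.2 = q.1.1 then 1 else 0
  | _, _ => 0

/-- The value `M := 3|V| + 2|E| + 2` used in the construction of `Ĝ`. -/
def bigM [Fintype V] [DecidableEq V] (G : SimpleGraph V) [DecidableRel G.Adj] : ℕ :=
  3 * Fintype.card V + 2 * G.edgeFinset.card + 2


section Aux

variable {W : Type*}

lemma lap_apply [Fintype W] (m : W → W → ℕ) (x : W → ℤ) (v : W) :
    lap m x v = ∑ w, (m v w : ℤ) * (x v - x w) := by
  simp [lap, mul_sub, Finset.sum_sub_distrib, Finset.sum_mul]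

lemma divDeg_sub [Fintype W] (f g : W → ℤ) : divDeg (f - g) = divDeg f - divDeg g := by
  simp [divDeg, Finset.sum_sub_distrib]

lemma divDeg_lap [Fintype W] (m : W → W → ℕ) (hm : ∀ u v, m u v = m v u) (x : W → ℤ) :
    divDeg (lap m x) = 0 := by
  have h : divDeg (lap m x) = ∑ v, ∑ w, (m v w : ℤ) * (x v - x w) := by
    simp [divDeg, lap_apply]
  have h2 : (∑ v, ∑ w, (m v w : ℤ) * (x v - x w))
      = -∑ v, ∑ w, (m v w : ℤ) * (x v - x w) := by
    conv_lhs => rw [Finset.sum_comm]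
    rw [← Finset.sum_neg_distrib]
    refine Finset.sum_congr rfl fun a _ => ?_
    rw [← Finset.sum_neg_distrib]
    refine Finset.sum_congr rfl fun b _ => ?_
    rw [hm b a]; ring
  rw [h]; linarith

lemma cut_bound [Fintype W] (m : W → W → ℕ) (hm : ∀ u v, m u v = m v u)
    (D : W → ℤ) (hD : Effective D) (x : W → ℤ) (hx : Effective (D - lap m x))
    (a b : W) (hab : x b < x a) : (m a b : ℤ) ≤ divDeg D := by
  classical
  set A : Finset W := Finset.univ.filter (fun v => x b < x v) with hA
  have haA : a ∈ A := by simp [hA, hab]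
  have hbA : b ∈ Aᶜ := by simp [hA]
  have hterm_nonneg : ∀ v ∈ A, ∀ w ∈ Aᶜ, 0 ≤ (m v w : ℤ) * (x v - x w) := by
    intro v hv w hw
    have hv' : x b < x v := by simpa [hA] using hv
    have hw' : ¬ x b < x w := by simpa [hA] using hw
    have hxw : x w ≤ x v := le_trans (not_lt.1 hw') (le_of_lt hv')
    have : (0:ℤ) ≤ x v - x w := by linarith
    positivity
  have hAA : (∑ v ∈ A, ∑ w ∈ A, (m v w : ℤ) * (x v - x w)) = 0 := by
    have h2 : (∑ v ∈ A, ∑ w ∈ A, (m v w : ℤ) * (x v - x w))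
        = -∑ v ∈ A, ∑ w ∈ A, (m v w : ℤ) * (x v - x w) := by
      conv_lhs => rw [Finset.sum_comm]
      rw [← Finset.sum_neg_distrib]
      refine Finset.sum_congr rfl fun c _ => ?_
      rw [← Finset.sum_neg_distrib]
      refine Finset.sum_congr rfl fun d _ => ?_
      rw [hm d c]; ring
    linarith
  have hlapA : (∑ v ∈ A, lap m x v)
      = ∑ v ∈ A, ∑ w ∈ Aᶜ, (m v w : ℤ) * (x v - x w) := by
    have hsplit : ∀ v, lap m x v
        = (∑ w ∈ A, (m v w : ℤ) * (x v - x w)) + ∑ w ∈ Aᶜ, (m v w : ℤ) * (x v - x w) := by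
      intro v; rw [lap_apply]; exact (Finset.sum_add_sum_compl A _).symm
    simp only [hsplit, Finset.sum_add_distrib, hAA, zero_add]
  have hMle : (m a b : ℤ) ≤ ∑ v ∈ A, ∑ w ∈ Aᶜ, (m v w : ℤ) * (x v - x w) := by
    have h1 : (m a b : ℤ) ≤ ∑ w ∈ Aᶜ, (m a w : ℤ) * (x a - x w) := by
      calc (m a b : ℤ) = (m a b : ℤ) * 1 := by ring
        _ ≤ (m a b : ℤ) * (x a - x b) := by
            have h1' : (1:ℤ) ≤ x a - x b := by omega
            exact mul_le_mul_of_nonneg_left h1' (by positivity)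
        _ ≤ ∑ w ∈ Aᶜ, (m a w : ℤ) * (x a - x w) :=
            Finset.single_le_sum (fun w hw => hterm_nonneg a haA w hw) hbA
    exact le_trans h1 (Finset.single_le_sum
      (fun v hv => Finset.sum_nonneg fun w hw => hterm_nonneg v hv w hw) haA)
  have hle2 : (∑ v ∈ A, lap m x v) ≤ ∑ v ∈ A, D v := by
    refine Finset.sum_le_sum fun v _ => ?_
    have := hx v
    rw [Pi.sub_apply] at this
    linarith
  have hle3 : (∑ v ∈ A, D v) ≤ divDeg D :=
    Finset.sum_le_sum_of_subset_of_nonneg (Finset.subset_univ A) (fun v _ _ => hD v)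
  rw [hlapA] at hle2
  linarith

lemma deg_ge_of_prop [Fintype W] [Nonempty W] (m : W → W → ℕ) (hm : ∀ u v, m u v = m v u)
    (D : W → ℤ) (k : ℤ) (hk0 : 0 ≤ k)
    (hkP : ∀ E : W → ℤ, Effective E → divDeg E ≤ k →
      ∃ D' : W → ℤ, DivEquiv m (D - E) D' ∧ Effective D') : k ≤ divDeg D := by
  classical
  obtain ⟨v₀⟩ := ‹Nonempty W›
  set E : W → ℤ := fun u => if u = v₀ then k else 0 with hEdef
  have hE : Effective E := fun u => by by_cases h : u = v₀ <;> simp [hEdef, h, hk0]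
  have hdegE : divDeg E = k := by simp [divDeg, hEdef]
  obtain ⟨D', ⟨y, hy⟩, hD'⟩ := hkP E hE hdegE.le
  have h0 : divDeg (D - E) - divDeg D' = 0 := by
    rw [← divDeg_sub, hy, divDeg_lap m hm]
  have hD'0 : 0 ≤ divDeg D' := Finset.sum_nonneg fun v _ => hD' v
  have h1 : divDeg (D - E) = divDeg D - k := by rw [divDeg_sub, hdegE]
  linarith

lemma one_le_divRank_ones [Fintype W] [Nonempty W] (m : W → W → ℕ)
    (hm : ∀ u v, m u v = m v u) : 1 ≤ divRank m (fun _ => (1:ℤ)) := by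
  classical
  have hlap0 : lap m (0 : W → ℤ) = 0 := by
    funext v; simp [lap]
  have hcond : ∃ D' : W → ℤ, DivEquiv m (fun _ => (1:ℤ)) D' ∧ Effective D' :=
    ⟨fun _ => 1, ⟨0, by rw [sub_self, hlap0]⟩, fun v => by norm_num⟩
  rw [divRank, if_pos hcond]
  have h1mem : (1:ℤ) ∈ {k : ℤ | 0 ≤ k ∧ ∀ E : W → ℤ, Effective E → divDeg E ≤ k →
      ∃ D' : W → ℤ, DivEquiv m ((fun _ => (1:ℤ)) - E) D' ∧ Effective D'} := by
    refine ⟨zero_le_one, fun E hE hdE => ⟨(fun _ => (1:ℤ)) - E, ⟨0, by rw [sub_self, hlap0]⟩,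
      fun v => ?_⟩⟩
    have hEv : E v ≤ 1 :=
      le_trans (Finset.single_le_sum (fun w _ => hE w) (Finset.mem_univ v)) hdE
    simp only [Pi.sub_apply]
    linarith
  have hbdd : BddAbove {k : ℤ | 0 ≤ k ∧ ∀ E : W → ℤ, Effective E → divDeg E ≤ k →
      ∃ D' : W → ℤ, DivEquiv m ((fun _ => (1:ℤ)) - E) D' ∧ Effective D'} :=
    ⟨divDeg (fun _ => (1:ℤ)), fun k hk => deg_ge_of_prop m hm _ k hk.1 hk.2⟩
  exact le_csSup hbdd h1mem

lemma one_le_of_rank [Fintype W] [Nonempty W] (m : W → W → ℕ)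
    (hm : ∀ u v, m u v = m v u) (D : W → ℤ) (h : 1 ≤ divRank m D) :
    1 ≤ divDeg D := by
  classical
  rw [divRank] at h
  split_ifs at h with hc
  · by_cases hb : BddAbove {k : ℤ | 0 ≤ k ∧ ∀ E : W → ℤ, Effective E → divDeg E ≤ k →
        ∃ D' : W → ℤ, DivEquiv m (D - E) D' ∧ Effective D'}
    · by_cases hne : ({k : ℤ | 0 ≤ k ∧ ∀ E : W → ℤ, Effective E → divDeg E ≤ k →
          ∃ D' : W → ℤ, DivEquiv m (D - E) D' ∧ Effective D'}).Nonempty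
      · obtain ⟨hk0, hkP⟩ := Int.csSup_mem hne hb
        exact le_trans h (deg_ge_of_prop m hm D _ hk0 hkP)
      · rw [Set.not_nonempty_iff_eq_empty.1 hne, Int.csSup_empty] at h
        linarith
    · rw [csSup_of_not_bddAbove hb, Int.csSup_empty] at h
      linarith
  · linarith

lemma dgon_le_card [Fintype W] [Nonempty W] (m : W → W → ℕ)
    (hm : ∀ u v, m u v = m v u) : dgon W m ≤ (Fintype.card W : ℤ) := by
  classical
  have hmem : (Fintype.card W : ℤ) ∈ {d : ℤ | ∃ D : W → ℤ, 1 ≤ divRank m D ∧ divDeg D = d} :=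
    ⟨fun _ => 1, one_le_divRank_ones m hm, by simp [divDeg, Finset.card_univ]⟩
  have hbdd : BddBelow {d : ℤ | ∃ D : W → ℤ, 1 ≤ divRank m D ∧ divDeg D = d} := by
    refine ⟨1, fun d hd => ?_⟩
    obtain ⟨D, h1, h2⟩ := hd
    exact h2 ▸ one_le_of_rank m hm D h1
  exact csInf_le hbdd hmem

end Aux

lemma hatM_symm [DecidableEq V] (G : SimpleGraph V) (M : ℕ) :
    ∀ u v, hatM G M u v = hatM G M v u := by
  rintro (u|u|u|u|p) (v|v|v|v|q) <;> simp [hatM]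
  exact if_congr ⟨fun ⟨h1, h2⟩ => ⟨h2.symm, h1.symm⟩, fun ⟨h1, h2⟩ => ⟨h2.symm, h1.symm⟩⟩ rfl rfl

lemma card_hatV [Fintype V] [DecidableEq V] (G : SimpleGraph V) [DecidableRel G.Adj] :
    Fintype.card (HatV G) = 3 * Fintype.card V + 2 * G.edgeFinset.card + 1 := by
  have e : {p : V × V // G.Adj p.1 p.2} ≃ G.Dart :=
    ⟨fun p => ⟨p.1, p.2⟩, fun d => ⟨d.toProd, d.adj⟩, fun p => rfl, fun d => rfl⟩
  have hc : Fintype.card {p : V × V // G.Adj p.1 p.2} = 2 * G.edgeFinset.card := by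
    rw [Fintype.card_congr e, SimpleGraph.dart_card_eq_twice_card_edges]
  simp only [HatV, Fintype.card_sum, Fintype.card_unit, hc]
  ring

/-- If `D` is an effective divisor on `Ĝ` with `deg(D) = dgon(Ĝ)`, then every `M`-fold
parallel class of edges of `Ĝ` is `D`-blocking; i.e. `T ≡_D T_v` for every `v ∈ V`,
`v ≡_D v'` for every `v ∈ V`, and `u ≡_D e_u` for every edge `e` of `G` with endpoint `u`. -/
theorem hat_M_fold_edges_blocking [Fintype V] [DecidableEq V] (G : SimpleGraph V)
    [DecidableRel G.Adj] (hG : G.Connected)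
    (D : HatV G → ℤ) (hD : Effective D)
    (hdeg : divDeg D = dgon (HatV G) (hatM G (bigM G))) :
    (∀ v : V, DEquiv (hatM G (bigM G)) D (Sum.inl ())
      (Sum.inr (Sum.inr (Sum.inr (Sum.inl v))))) ∧
    (∀ v : V, DEquiv (hatM G (bigM G)) D (Sum.inr (Sum.inl v))
      (Sum.inr (Sum.inr (Sum.inl v)))) ∧
    (∀ p : {p : V × V // G.Adj p.1 p.2}, DEquiv (hatM G (bigM G)) D
      (Sum.inr (Sum.inl p.1.1)) (Sum.inr (Sum.inr (Sum.inr (Sum.inr p))))) := by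
  
  have hm := hatM_symm G (bigM G)
  haveI : Nonempty (HatV G) := ⟨Sum.inl ()⟩
  have hdegD : divDeg D < (bigM G : ℤ) := by
    have h1 : dgon (HatV G) (hatM G (bigM G)) ≤ (Fintype.card (HatV G) : ℤ) :=
      dgon_le_card _ hm
    have h2 : (Fintype.card (HatV G) : ℤ) < (bigM G : ℤ) := by
      rw [card_hatV]
      simp only [bigM]
      push_cast
      linarith
    rw [hdeg]
    linarith
  have key : ∀ a b : HatV G, hatM G (bigM G) a b = bigM G →
      DEquiv (hatM G (bigM G)) D a b := by
    intro a b hab x hx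
    by_contra hne
    rcases lt_or_gt_of_ne hne with h | h
    · have hcb := cut_bound _ hm D hD x hx b a h
      rw [hm b a, hab] at hcb
      linarith
    · have hcb := cut_bound _ hm D hD x hx a b h
      rw [hab] at hcb
      linarith
  refine ⟨fun v => key _ _ ?_, fun v => key _ _ ?_, fun p => key _ _ ?_⟩ <;> simp [hatM]
end
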